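/- For any semantic protocol P, agents always know their own numbers and secrets: for every agent a and all gossip states, if (G,σ) ∼_a^P (G,τ) then N^σ_a = N^τ_a and S^σ_a = S^τ_a. Consequently, the formulas N_ab → K_a^P N_ab, ¬N_ab → K_a^P ¬N_ab, S_ab → K_a^P S_ab and ¬S_ab → K_a^P ¬S_ab hold at every gossip state (G,σ) with σ ∈ P(G); in particular, the protocol LNS (permitting ab at (G,σ) iff N^σ a b and not S^σ a b) is epistemic. -/
import Mathlib


set_option maxHeartbeats 1000000

structure GossipGraph (A : Type) : Type where
  N : A → A → Prop
  S : A → A → Prop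
  refl_S : ∀ a, S a a
  S_sub_N : ∀ a b, S a b → N a b

namespace Gossip

variable {A : Type}

def Initial (G : GossipGraph A) : Prop := ∀ a b, G.S a b ↔ a = b

def doCall (G : GossipGraph A) (c : A × A) : GossipGraph A where
  N x y := G.N x y ∨ ((x = c.1 ∨ x = c.2) ∧ (G.N c.1 y ∨ G.N c.2 y))
  S x y := G.S x y ∨ ((x = c.1 ∨ x = c.2) ∧ (G.S c.1 y ∨ G.S c.2 y))
  refl_S a := Or.inl (G.refl_S a)
  S_sub_N a b h := by
    rcases h with h | ⟨h1, h2 | h2⟩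
    · exact Or.inl (G.S_sub_N a b h)
    · exact Or.inr ⟨h1, Or.inl (G.S_sub_N _ _ h2)⟩
    · exact Or.inr ⟨h1, Or.inr (G.S_sub_N _ _ h2)⟩

def doCalls (G : GossipGraph A) (σ : List (A × A)) : GossipGraph A :=
  σ.foldl doCall G

def PossibleSeq (G : GossipGraph A) : List (A × A) → Prop
  | [] => True
  | c :: σ => c.1 ≠ c.2 ∧ G.N c.1 c.2 ∧ PossibleSeq (doCall G c) σ

mutual
  inductive Form (A : Type) : Type where
    | top : Form A
    | atomN : A → A → Form A
    | atomS : A → A → Form A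
    | neg : Form A → Form A
    | conj : Form A → Form A → Form A
    | K : A → (A → A → Form A) → Form A → Form A
    | box : Prog A → Form A → Form A
  inductive Prog (A : Type) : Type where
    | test : Form A → Prog A
    | call : A → A → Prog A
    | seq : Prog A → Prog A → Prog A
    | cup : Prog A → Prog A → Prog A
    | star : Prog A → Prog A
end

abbrev Protocol (A : Type) := A → A → Form A

inductive Epi (G : GossipGraph A) (perm : List (A × A) → (A × A) → Prop) (a : A) :
    List (A × A) → List (A × A) → Prop where
  | refl : Epi G perm a [] []
  | call_out {σ τ : List (A × A)} {b : A} :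
      Epi G perm a σ τ →
      (∀ x, (doCalls G σ).N b x ↔ (doCalls G τ).N b x) →
      (∀ x, (doCalls G σ).S b x ↔ (doCalls G τ).S b x) →
      perm σ (a, b) → perm τ (a, b) →
      Epi G perm a (σ ++ [(a, b)]) (τ ++ [(a, b)])
  | call_in {σ τ : List (A × A)} {b : A} :
      Epi G perm a σ τ →
      (∀ x, (doCalls G σ).N b x ↔ (doCalls G τ).N b x) →
      (∀ x, (doCalls G σ).S b x ↔ (doCalls G τ).S b x) →
      perm σ (b, a) → perm τ (b, a) →
      Epi G perm a (σ ++ [(b, a)]) (τ ++ [(b, a)])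
  | other {σ τ : List (A × A)} {c d e f : A} :
      Epi G perm a σ τ →
      c ≠ a → d ≠ a → e ≠ a → f ≠ a →
      perm σ (c, d) → perm τ (e, f) →
      Epi G perm a (σ ++ [(c, d)]) (τ ++ [(e, f)])

mutual
  def Sat (G : GossipGraph A) : List (A × A) → Form A → Prop
    | _, Form.top => True
    | σ, Form.atomN a b => (doCalls G σ).N a b
    | σ, Form.atomS a b => (doCalls G σ).S a b
    | σ, Form.neg φ => ¬ Sat G σ φ
    | σ, Form.conj φ ψ => Sat G σ φ ∧ Sat G σ ψ
    | σ, Form.K a P φ =>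
        ∀ τ, Epi G (fun ρ c => c.1 ≠ c.2 ∧ (doCalls G ρ).N c.1 c.2 ∧ Sat G ρ (P c.1 c.2)) a τ σ →
          Sat G τ φ
    | σ, Form.box π φ => ∀ τ, ProgRel G π σ τ → Sat G τ φ
  def ProgRel (G : GossipGraph A) : Prog A → List (A × A) → List (A × A) → Prop
    | Prog.test φ, σ, τ => σ = τ ∧ Sat G σ φ
    | Prog.call a b, σ, τ => a ≠ b ∧ (doCalls G σ).N a b ∧ τ = σ ++ [(a, b)]
    | Prog.seq π π', σ, τ => ∃ ρ, ProgRel G π σ ρ ∧ ProgRel G π' ρ τ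
    | Prog.cup π π', σ, τ => ProgRel G π σ τ ∨ ProgRel G π' σ τ
    | Prog.star π, σ, τ => Relation.ReflTransGen (fun x y => ProgRel G π x y) σ τ
end


/-- A call `ab` is `P`-permitted at `(G, σ)` iff `a ≠ b`, `N^σ a b` and `G,σ ⊨ P_{ab}`. -/
def Permits (G : GossipGraph A) (P : Protocol A) (σ : List (A × A)) (c : A × A) : Prop :=
  c.1 ≠ c.2 ∧ (doCalls G σ).N c.1 c.2 ∧ Sat G σ (P c.1 c.2)

/-- The least set of call sequences containing `ε` and closed under adding permitted calls. -/
inductive Ext (G : GossipGraph A) (perm : List (A × A) → (A × A) → Prop) : List (A × A) → Prop where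
  | nil : Ext G perm []
  | snoc {σ : List (A × A)} {c : A × A} : Ext G perm σ → perm σ c → Ext G perm (σ ++ [c])

/-- The extension of a syntactic protocol `P` on an (initial) gossip graph `G`. -/
def extension (P : Protocol A) (G : GossipGraph A) : Set (List (A × A)) :=
  { σ | Ext G (Permits G P) σ }

/-- A formula is valid iff it is true at every gossip state, i.e. at every pair of an
initial gossip graph and a call sequence possible on it. -/
def Valid (φ : Form A) : Prop :=
  ∀ G : GossipGraph A, Initial G → ∀ σ : List (A × A), PossibleSeq G σ → Sat G σ φ

def impF (φ ψ : Form A) : Form A := Form.neg (Form.conj φ (Form.neg ψ))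
def orF (φ ψ : Form A) : Form A := Form.neg (Form.conj (Form.neg φ) (Form.neg ψ))
def iffF (φ ψ : Form A) : Form A := Form.conj (impF φ ψ) (impF ψ φ)
/-- The epistemic "possibility" dual `K̂ := ¬K¬`. -/
def hatK (a : A) (P : Protocol A) (φ : Form A) : Form A := Form.neg (Form.K a P (Form.neg φ))

/-- A semantic protocol, as raw data: a map from (initial) gossip graphs to sets of call
sequences. -/
abbrev RawSem (A : Type) := GossipGraph A → Set (List (A × A))

/-- For a semantic protocol, a call `c` is permitted at `(G,σ)` iff `σ;c ∈ P(G)`. -/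
def semPerm (Q : RawSem A) (G : GossipGraph A) (σ : List (A × A)) (c : A × A) : Prop :=
  σ ++ [c] ∈ Q G

/-- `σ` is terminal (in `Q(G)`) iff no further call is permitted. -/
def TerminalIn (Q : RawSem A) (G : GossipGraph A) (σ : List (A × A)) : Prop :=
  ∀ c : A × A, σ ++ [c] ∉ Q G

/-- All agents are experts: everyone knows all secrets. -/
def AllExpert (G : GossipGraph A) : Prop := ∀ a b : A, G.S a b

/-- A semantic protocol: assigns to each initial gossip graph a set of call sequences
possible on it, containing the empty sequence and closed under prefixes. -/
structure SemProtocol (A : Type) : Type where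
  ext : GossipGraph A → Set (List (A × A))
  nil_mem : ∀ G : GossipGraph A, Initial G → [] ∈ ext G
  prefix_closed : ∀ G : GossipGraph A, Initial G → ∀ σ c, σ ++ [c] ∈ ext G → σ ∈ ext G
  possible : ∀ G : GossipGraph A, Initial G → ∀ σ ∈ ext G, PossibleSeq G σ

/-- A semantic protocol is epistemic iff a call `ab` is permitted at `(G,σ)` exactly when it
is permitted at all states that agent `a` cannot distinguish from `(G,σ)`. -/
def SemEpistemic (Q : RawSem A) : Prop :=
  ∀ G : GossipGraph A, Initial G → ∀ σ ∈ Q G, ∀ a b : A, a ≠ b →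
    (σ ++ [(a, b)] ∈ Q G ↔ ∀ τ, Epi G (semPerm Q G) a τ σ → τ ++ [(a, b)] ∈ Q G)

/-- Relabelling the agents of a gossip graph along a permutation. -/
def mapGraph (J : Equiv.Perm A) (G : GossipGraph A) : GossipGraph A where
  N x y := G.N (J.symm x) (J.symm y)
  S x y := G.S (J.symm x) (J.symm y)
  refl_S a := G.refl_S _
  S_sub_N a b h := G.S_sub_N _ _ h

/-- Relabelling a call sequence, callwise. -/
def mapSeq (J : Equiv.Perm A) (σ : List (A × A)) : List (A × A) :=
  σ.map (fun c => (J c.1, J c.2))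

mutual
  /-- Relabelling the agents in a formula along a permutation. -/
  def mapForm (J : Equiv.Perm A) : Form A → Form A
    | Form.top => Form.top
    | Form.atomN a b => Form.atomN (J a) (J b)
    | Form.atomS a b => Form.atomS (J a) (J b)
    | Form.neg φ => Form.neg (mapForm J φ)
    | Form.conj φ ψ => Form.conj (mapForm J φ) (mapForm J ψ)
    | Form.K a P φ => Form.K (J a) (fun x y => mapForm J (P (J.symm x) (J.symm y))) (mapForm J φ)
    | Form.box π φ => Form.box (mapProg J π) (mapForm J φ)
  /-- Relabelling the agents in a program along a permutation. -/
  def mapProg (J : Equiv.Perm A) : Prog A → Prog A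
    | Prog.test φ => Prog.test (mapForm J φ)
    | Prog.call a b => Prog.call (J a) (J b)
    | Prog.seq π π' => Prog.seq (mapProg J π) (mapProg J π')
    | Prog.cup π π' => Prog.cup (mapProg J π) (mapProg J π')
    | Prog.star π => Prog.star (mapProg J π)
end

/-- A semantic protocol is symmetric iff it commutes with relabelling of the agents. -/
def SemSymmetric (Q : RawSem A) : Prop :=
  ∀ (J : Equiv.Perm A) (G : GossipGraph A), Initial G →
    Q (mapGraph J G) = mapSeq J '' Q G

def listConj (l : List (Form A)) : Form A := l.foldr Form.conj Form.top
def listDisj (l : List (Form A)) : Form A := l.foldr orF (Form.neg Form.top)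

noncomputable def pairsList (A : Type) [Fintype A] : List (A × A) := (Finset.univ : Finset (A × A)).toList
noncomputable def distinctPairs (A : Type) [Fintype A] [DecidableEq A] : List (A × A) :=
  (pairsList A).filter (fun c => decide (c.1 ≠ c.2))

/-- The formula `Ex`: all agents are experts. -/
noncomputable def ExForm (A : Type) [Fintype A] : Form A :=
  listConj ((pairsList A).map (fun c => Form.atomS c.1 c.2))

/-- `Ex ∨ ⋁_{i≠j} (N_ij ∧ P_ij)`. -/
noncomputable def oneStepBody (A : Type) [Fintype A] [DecidableEq A] (P : Protocol A) : Form A :=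
  orF (ExForm A) (listDisj ((distinctPairs A).map (fun c => Form.conj (Form.atomN c.1 c.2) (P c.1 c.2))))

/-- Hard one-step strengthening: `P_ab ∧ K_a^P [ab](Ex ∨ ⋁_{i≠j}(N_ij ∧ P_ij))`. -/
noncomputable def hardOneStep {A : Type} [Fintype A] [DecidableEq A] (P : Protocol A) : Protocol A :=
  fun a b => Form.conj (P a b) (Form.K a P (Form.box (Prog.call a b) (oneStepBody A P)))

/-- Soft one-step strengthening: `P_ab ∧ K̂_a^P [ab](Ex ∨ ⋁_{i≠j}(N_ij ∧ P_ij))`. -/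
noncomputable def softOneStep {A : Type} [Fintype A] [DecidableEq A] (P : Protocol A) : Protocol A :=
  fun a b => Form.conj (P a b) (hatK a P (Form.box (Prog.call a b) (oneStepBody A P)))

/-- The protocol `P` as a program:
`(⋃_{a≠b} ?(N_ab ∧ P_ab);ab)* ; ?⋀_{a≠b} ¬(N_ab ∧ P_ab)`. -/
noncomputable def protProg (A : Type) [Fintype A] [DecidableEq A] (P : Protocol A) : Prog A :=
  Prog.seq
    (Prog.star (((distinctPairs A).map (fun c =>
      Prog.seq (Prog.test (Form.conj (Form.atomN c.1 c.2) (P c.1 c.2))) (Prog.call c.1 c.2))).foldr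
        Prog.cup (Prog.test (Form.neg Form.top))))
    (Prog.test (listConj ((distinctPairs A).map (fun c =>
      Form.neg (Form.conj (Form.atomN c.1 c.2) (P c.1 c.2))))))

/-- Hard look-ahead strengthening: `P_ab ∧ K_a^P [ab]⟨P⟩Ex`. -/
noncomputable def hardLookAhead {A : Type} [Fintype A] [DecidableEq A] (P : Protocol A) : Protocol A :=
  fun a b => Form.conj (P a b)
    (Form.K a P (Form.box (Prog.call a b)
      (Form.neg (Form.box (protProg A P) (Form.neg (ExForm A))))))

/-- Soft look-ahead strengthening: `P_ab ∧ K̂_a^P [ab]⟨P⟩Ex`. -/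
noncomputable def softLookAhead {A : Type} [Fintype A] [DecidableEq A] (P : Protocol A) : Protocol A :=
  fun a b => Form.conj (P a b)
    (hatK a P (Form.box (Prog.call a b)
      (Form.neg (Form.box (protProg A P) (Form.neg (ExForm A))))))

/-- Hard uniform backward defoliation of a semantic protocol. -/
def HUBD (Q : RawSem A) : RawSem A := fun G =>
  { σ | σ ∈ Q G ∧ (σ = [] ∨ ∃ τ : List (A × A), ∃ a b : A, σ = τ ++ [(a, b)] ∧
      ∀ τ', Epi G (semPerm Q G) a τ' τ →
        (τ' ++ [(a, b)] ∈ Q G ∧ TerminalIn Q G (τ' ++ [(a, b)])) →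
          AllExpert (doCalls G (τ' ++ [(a, b)]))) }

/-- Soft uniform backward defoliation of a semantic protocol. -/
def SUBD (Q : RawSem A) : RawSem A := fun G =>
  { σ | σ ∈ Q G ∧ (σ = [] ∨ ∃ τ : List (A × A), ∃ a b : A, σ = τ ++ [(a, b)] ∧
      ∃ τ', Epi G (semPerm Q G) a τ' τ ∧
        ((τ' ++ [(a, b)] ∈ Q G ∧ TerminalIn Q G (τ' ++ [(a, b)])) →
          AllExpert (doCalls G (τ' ++ [(a, b)])))) }

/-- The syntactic protocol LNS: `LNS_ab := ¬ S_ab`. -/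
def LNSsyn (A : Type) : Protocol A := fun a b => Form.neg (Form.atomS a b)

/-- LNS-permitted: call `ab` permitted at `(G,σ)` iff `N^σ a b` and not `S^σ a b`. -/
def LNSperm (G : GossipGraph A) (σ : List (A × A)) (c : A × A) : Prop :=
  c.1 ≠ c.2 ∧ (doCalls G σ).N c.1 c.2 ∧ ¬ (doCalls G σ).S c.1 c.2

/-- LNS as a semantic protocol. -/
def LNSsem : RawSem A := fun G => { σ | Ext G (LNSperm G) σ }

/-- A semantic protocol is strongly successful on `G` iff every terminal sequence makes
all agents experts. -/
def StronglySuccessfulOn (Q : RawSem A) (G : GossipGraph A) : Prop :=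
  ∀ σ ∈ Q G, TerminalIn Q G σ → AllExpert (doCalls G σ)

/-- A semantic protocol is weakly successful on `G` iff some terminal sequence makes
all agents experts. -/
def WeaklySuccessfulOn (Q : RawSem A) (G : GossipGraph A) : Prop :=
  ∃ σ ∈ Q G, TerminalIn Q G σ ∧ AllExpert (doCalls G σ)


lemma doCalls_append (G : GossipGraph A) (σ : List (A × A)) (c : A × A) :
    doCalls G (σ ++ [c]) = doCall (doCalls G σ) c := by
  simp [doCalls, List.foldl_append]

lemma epi_agree {G : GossipGraph A} {perm : List (A × A) → (A × A) → Prop} {a : A}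
    {σ τ : List (A × A)} (h : Epi G perm a σ τ) :
    (∀ x, (doCalls G σ).N a x ↔ (doCalls G τ).N a x) ∧
    (∀ x, (doCalls G σ).S a x ↔ (doCalls G τ).S a x) := by
  induction h with
  | refl => exact ⟨fun x => Iff.rfl, fun x => Iff.rfl⟩
  | call_out h hN hS _ _ ih =>
      constructor <;> intro x <;>
        simp [doCalls_append, doCall, ih.1 x, ih.2 x, hN x, hS x, hN, hS]
  | call_in h hN hS _ _ ih =>
      constructor <;> intro x <;>
        simp [doCalls_append, doCall, ih.1 x, ih.2 x, hN x, hS x, hN, hS]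
  | other h hc hd he hf _ _ ih =>
      constructor <;> intro x <;>
        simp [doCalls_append, doCall, Ne.symm hc, Ne.symm hd, Ne.symm he, Ne.symm hf,
          ih.1 x, ih.2 x]

lemma epi_mem_LNS {G : GossipGraph A} {a : A} {σ τ : List (A × A)}
    (h : Epi G (semPerm (LNSsem (A := A)) G) a σ τ) : σ ∈ LNSsem G := by
  induction h with
  | refl => exact Ext.nil
  | call_out _ _ _ hp _ _ => exact hp
  | call_in _ _ _ hp _ _ => exact hp
  | other _ _ _ _ _ hp _ _ => exact hp

lemma epi_refl_LNS {G : GossipGraph A} (a : A) {σ : List (A × A)}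
    (h : σ ∈ LNSsem G) : Epi G (semPerm (LNSsem (A := A)) G) a σ σ := by
  induction h with
  | nil => exact Epi.refl
  | @snoc σ c hσ hperm ih =>
      have hmem : semPerm (LNSsem (A := A)) G σ c := Ext.snoc hσ hperm
      by_cases h1 : c.1 = a
      · have : c = (a, c.2) := by rw [← h1]
        rw [this] at hmem ⊢
        exact Epi.call_out ih (fun x => Iff.rfl) (fun x => Iff.rfl) hmem hmem
      · by_cases h2 : c.2 = a
        · have : c = (c.1, a) := by rw [← h2]
          rw [this] at hmem ⊢
          exact Epi.call_in ih (fun x => Iff.rfl) (fun x => Iff.rfl) hmem hmem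
        · have : c = (c.1, c.2) := rfl
          rw [this] at hmem ⊢
          exact Epi.other ih h1 h2 h1 h2 hmem hmem

lemma snoc_inj {α : Type*} {l₁ l₂ : List α} {x y : α} (h : l₁ ++ [x] = l₂ ++ [y]) :
    l₁ = l₂ ∧ x = y := by
  have := List.append_inj' h rfl
  simpa using this

lemma ext_snoc_inv {G : GossipGraph A} {p : List (A × A) → (A × A) → Prop}
    {σ : List (A × A)} {c : A × A} (h : Ext G p (σ ++ [c])) : Ext G p σ ∧ p σ c := by
  generalize hρ : σ ++ [c] = ρ at h
  cases h with
  | nil => simp at hρ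
  | snoc h hp =>
    obtain ⟨h1, h2⟩ := snoc_inj hρ.symm
    subst h1; subst h2
    exact ⟨h, hp⟩

/-- Agents always know their own numbers and secrets: `∼_a^P`-related states agree on
agent `a`'s numbers and secrets; hence `N_ab → K_a^P N_ab`, `¬N_ab → K_a^P ¬N_ab`,
`S_ab → K_a^P S_ab` and `¬S_ab → K_a^P ¬S_ab` hold at every state of the extension;
in particular the semantic protocol LNS is epistemic. -/
theorem agents_know_own_numbers_and_secrets {A : Type} [Fintype A] (P : SemProtocol A)
    (G : GossipGraph A) (hG : Initial G) (a : A) :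
    (∀ σ τ : List (A × A), Epi G (semPerm P.ext G) a σ τ →
      (∀ x, (doCalls G σ).N a x ↔ (doCalls G τ).N a x) ∧
      (∀ x, (doCalls G σ).S a x ↔ (doCalls G τ).S a x)) ∧
    (∀ σ ∈ P.ext G, ∀ b : A,
      ((doCalls G σ).N a b → ∀ τ, Epi G (semPerm P.ext G) a τ σ → (doCalls G τ).N a b) ∧
      (¬ (doCalls G σ).N a b → ∀ τ, Epi G (semPerm P.ext G) a τ σ → ¬ (doCalls G τ).N a b) ∧
      ((doCalls G σ).S a b → ∀ τ, Epi G (semPerm P.ext G) a τ σ → (doCalls G τ).S a b) ∧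
      (¬ (doCalls G σ).S a b → ∀ τ, Epi G (semPerm P.ext G) a τ σ → ¬ (doCalls G τ).S a b)) ∧
    SemEpistemic (LNSsem (A := A)) := by
  refine ⟨fun σ τ h => epi_agree h, ?_, ?_⟩
  · intro σ _ b
    refine ⟨?_, ?_, ?_, ?_⟩
    · intro hN τ h
      exact ((epi_agree h).1 b).mpr hN
    · intro hN τ h hτ
      exact hN (((epi_agree h).1 b).mp hτ)
    · intro hS τ h
      exact ((epi_agree h).2 b).mpr hS
    · intro hS τ h hτ
      exact hS (((epi_agree h).2 b).mp hτ)
  · intro G' hG' σ hσ a' b hab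
    constructor
    · intro h τ hτ
      have hτmem : τ ∈ LNSsem G' := epi_mem_LNS hτ
      obtain ⟨_, hne, hN, hS⟩ := ext_snoc_inv h
      have hN' : (doCalls G' τ).N a' b := ((epi_agree hτ).1 b).mpr hN
      have hS' : ¬ (doCalls G' τ).S a' b := fun hSτ => hS (((epi_agree hτ).2 b).mp hSτ)
      exact Ext.snoc hτmem ⟨hne, hN', hS'⟩
    · intro h
      exact h σ (epi_refl_LNS a' hσ)

end Gossip
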